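/- Suppose the hypotheses of Theorem 1 hold, and additionally V(x̄_0, x_0) = 0 (i.e., x_0 = P x̄_0). Then for any input sequence with ‖ū_ℓ‖ ≤ ū_max for all ℓ, the closed-loop trajectories satisfy ‖C̄ x̄_ℓ − C x_ℓ‖ ≤ γ · ū_max for all ℓ ∈ ℕ. -/

import Mathlib

/-!
The error `e = x - P x̄` obeys `e⁺ = (A_L + B_L K) e + (B_L R - P B̄_L) ū`, because the regulator
equation `P Ā_L = A_L P + B_L Q` cancels the reference dynamics. In the norm `‖M^{1/2} ·‖` the
Lyapunov inequality makes `A_L + B_L K` a `√(1 - 2λ)`-contraction, and since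
`√(1 - 2λ) √(1 - λ) + λ ≤ √(1 - λ)` the ball of radius `γ ū_max` is invariant; `e₀ = 0` starts
in it. Finally `C̄ x̄ - C x = -C e` and `M ⪰ CᵀC` bound the output error by `‖M^{1/2} e‖`.
-/

open Matrix

noncomputable def eunorm {n : ℕ} (v : Fin n → ℝ) : ℝ :=
  ‖(WithLp.equiv 2 (Fin n → ℝ)).symm v‖

noncomputable def specNorm {m n : ℕ} (A : Matrix (Fin m) (Fin n) ℝ) : ℝ :=
  ‖LinearMap.toContinuousLinearMap (Matrix.toEuclideanLin A)‖

open scoped ComplexOrder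

namespace Matrix.IsHermitian

variable {𝕜 ι : Type*} [RCLike 𝕜] [Fintype ι] [DecidableEq ι] {A : Matrix ι ι 𝕜}

noncomputable def spectralSqrt (hA : A.IsHermitian) : Matrix ι ι 𝕜 :=
  hA.eigenvectorUnitary.1 * diagonal ((↑) ∘ Real.sqrt ∘ hA.eigenvalues) *
    (star hA.eigenvectorUnitary : Matrix ι ι 𝕜)

lemma isHermitian_spectralSqrt (hA : A.IsHermitian) : hA.spectralSqrt.IsHermitian :=
  isHermitian_mul_mul_conjTranspose _ (isHermitian_diagonal_of_self_adjoint _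
    (by ext i; simp))

end Matrix.IsHermitian

lemma Matrix.PosSemidef.spectralSqrt_mul_self {𝕜 ι : Type*} [RCLike 𝕜] [Fintype ι] [DecidableEq ι]
    {A : Matrix ι ι 𝕜} (hA : A.PosSemidef) : hA.1.spectralSqrt * hA.1.spectralSqrt = A := by
  have hU : (star hA.1.eigenvectorUnitary : Matrix ι ι 𝕜) * hA.1.eigenvectorUnitary.1 = 1 :=
    Unitary.coe_star_mul_self _
  conv_rhs => rw [hA.1.spectral_theorem, Unitary.conjStarAlgAut_apply]
  simp only [Matrix.IsHermitian.spectralSqrt, Matrix.mul_assoc]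
  rw [← Matrix.mul_assoc _ _ (diagonal _ * _), hU, Matrix.one_mul,
    ← Matrix.mul_assoc (diagonal _), diagonal_mul_diagonal]
  congr 3
  funext i
  simp [← RCLike.ofReal_mul, Real.mul_self_sqrt (hA.eigenvalues_nonneg i)]

section EuclideanNorm

variable {k m n : ℕ}

lemma eunorm_nonneg (v : Fin n → ℝ) : 0 ≤ eunorm v := norm_nonneg _

lemma eunorm_zero : eunorm (0 : Fin n → ℝ) = 0 := by simp [eunorm]

lemma eunorm_add_le (v w : Fin n → ℝ) : eunorm (v + w) ≤ eunorm v + eunorm w :=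
  norm_add_le _ _

lemma eunorm_neg (v : Fin n → ℝ) : eunorm (-v) = eunorm v := norm_neg _

lemma eunorm_sq (v : Fin n → ℝ) : eunorm v ^ 2 = v ⬝ᵥ v := by
  rw [eunorm, EuclideanSpace.norm_eq, Real.sq_sqrt (by positivity)]
  simp [dotProduct, sq]

lemma specNorm_nonneg (A : Matrix (Fin m) (Fin n) ℝ) : 0 ≤ specNorm A := norm_nonneg _

lemma eunorm_mulVec_le (A : Matrix (Fin m) (Fin n) ℝ) (v : Fin n → ℝ) :
    eunorm (A *ᵥ v) ≤ specNorm A * eunorm v := by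
  simpa [eunorm, specNorm] using
    (LinearMap.toContinuousLinearMap (Matrix.toEuclideanLin A)).le_opNorm
      ((WithLp.equiv 2 (Fin n → ℝ)).symm v)

lemma eunorm_mulVec_sq (A : Matrix (Fin m) (Fin n) ℝ) (v : Fin n → ℝ) :
    eunorm (A *ᵥ v) ^ 2 = v ⬝ᵥ ((Aᵀ * A) *ᵥ v) := by
  rw [eunorm_sq, ← mulVec_mulVec, dotProduct_mulVec v, vecMul_transpose]

lemma eunorm_mulVec_le_mul_of_posSemidef {A : Matrix (Fin m) (Fin n) ℝ}
    {B : Matrix (Fin k) (Fin n) ℝ} {c : ℝ} (hc : 0 ≤ c)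
    (h : (c ^ 2 • (Bᵀ * B) - Aᵀ * A).PosSemidef) (v : Fin n → ℝ) :
    eunorm (A *ᵥ v) ≤ c * eunorm (B *ᵥ v) := by
  have hv := h.dotProduct_mulVec_nonneg v
  simp only [star_trivial, sub_mulVec, smul_mulVec, dotProduct_sub, dotProduct_smul,
    smul_eq_mul] at hv
  rw [← pow_le_pow_iff_left₀ (eunorm_nonneg _) (mul_nonneg hc (eunorm_nonneg _))
    two_ne_zero, mul_pow, eunorm_mulVec_sq, eunorm_mulVec_sq]
  linarith

end EuclideanNorm

lemma sqrt_one_sub_two_mul_mul_div_mul_add_le {l d : ℝ} (hl0 : 0 < l) (hl : l ≤ 1 / 2)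
    (hd : 0 ≤ d) : √(1 - 2 * l) * (√(1 - l) / l * d) + d ≤ √(1 - l) / l * d := by
  have hs : √(1 - l) ^ 2 = 1 - l := Real.sq_sqrt (by linarith)
  have hls : 0 ≤ √(1 - l) - l := by nlinarith [Real.sqrt_nonneg (1 - l)]
  have hroot : √((1 - 2 * l) * (1 - l)) ≤ √(1 - l) - l := by
    rw [← Real.sqrt_sq hls]
    exact Real.sqrt_le_sqrt (by nlinarith [sq_nonneg (√(1 - l) - 1)])
  rw [Real.sqrt_mul (by linarith)] at hroot
  calc √(1 - 2 * l) * (√(1 - l) / l * d) + d = (√(1 - 2 * l) * √(1 - l) + l) * d / l := by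
        field_simp
    _ ≤ √(1 - l) * d / l := by gcongr; linarith
    _ = √(1 - l) / l * d := by ring

section ClosedLoop

variable {k m mb n nb : ℕ}

lemma tracking_error_succ {A_L : Matrix (Fin n) (Fin n) ℝ} {B_L : Matrix (Fin n) (Fin m) ℝ}
    {Ab_L : Matrix (Fin nb) (Fin nb) ℝ} {Bb_L : Matrix (Fin nb) (Fin mb) ℝ}
    {K : Matrix (Fin m) (Fin n) ℝ} {P : Matrix (Fin n) (Fin nb) ℝ}
    {Q : Matrix (Fin m) (Fin nb) ℝ} {R : Matrix (Fin m) (Fin mb) ℝ}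
    (hPA : P * Ab_L = A_L * P + B_L * Q) {xb xb' : Fin nb → ℝ} {x x' : Fin n → ℝ}
    {ub : Fin mb → ℝ} (hxb' : xb' = Ab_L *ᵥ xb + Bb_L *ᵥ ub)
    (hx' : x' = A_L *ᵥ x + B_L *ᵥ (R *ᵥ ub + Q *ᵥ xb + K *ᵥ (x - P *ᵥ xb))) :
    x' - P *ᵥ xb' = (A_L + B_L * K) *ᵥ (x - P *ᵥ xb) + (B_L * R - P * Bb_L) *ᵥ ub := by
  have hPAx : P *ᵥ (Ab_L *ᵥ xb) = A_L *ᵥ (P *ᵥ xb) + B_L *ᵥ (Q *ᵥ xb) := by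
    rw [mulVec_mulVec, hPA, add_mulVec, mulVec_mulVec, mulVec_mulVec]
  rw [hx', hxb']
  simp only [mulVec_add, add_mulVec, mulVec_sub, sub_mulVec, ← mulVec_mulVec, hPAx]
  abel

lemma eunorm_mulVec_mulVec_le_of_lyapunov {S : Matrix (Fin k) (Fin n) ℝ}
    {M A : Matrix (Fin n) (Fin n) ℝ} (hS : Sᵀ * S = M) {l : ℝ} (hl : l ≤ 1 / 2)
    (h : ((-(2 * l)) • M - (Aᵀ * M * A - M)).PosSemidef) (v : Fin n → ℝ) :
    eunorm (S *ᵥ (A *ᵥ v)) ≤ √(1 - 2 * l) * eunorm (S *ᵥ v) := by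
  rw [mulVec_mulVec]
  refine eunorm_mulVec_le_mul_of_posSemidef (Real.sqrt_nonneg _) ?_ v
  convert h using 1
  rw [Real.sq_sqrt (by linarith), hS, transpose_mul, Matrix.mul_assoc, ← Matrix.mul_assoc Sᵀ,
    hS, ← Matrix.mul_assoc]
  module

lemma eunorm_mulVec_le_of_contracting {S : Matrix (Fin k) (Fin n) ℝ}
    {A : Matrix (Fin n) (Fin n) ℝ} {D : Matrix (Fin n) (Fin m) ℝ} {c u_max b : ℝ}
    (hc : 0 ≤ c) (hA : ∀ v, eunorm (S *ᵥ (A *ᵥ v)) ≤ c * eunorm (S *ᵥ v))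
    {e : ℕ → Fin n → ℝ} {u : ℕ → Fin m → ℝ} (hu : ∀ ℓ, eunorm (u ℓ) ≤ u_max)
    (he : ∀ ℓ, e (ℓ + 1) = A *ᵥ e ℓ + D *ᵥ u ℓ) (h0 : eunorm (S *ᵥ e 0) ≤ b)
    (hb : c * b + specNorm (S * D) * u_max ≤ b) (ℓ : ℕ) :
    eunorm (S *ᵥ e ℓ) ≤ b := by
  induction ℓ with
  | zero => exact h0
  | succ ℓ ih =>
    calc eunorm (S *ᵥ e (ℓ + 1))
        ≤ eunorm (S *ᵥ (A *ᵥ e ℓ)) + eunorm ((S * D) *ᵥ u ℓ) := by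
          rw [he, mulVec_add, mulVec_mulVec _ S D]; exact eunorm_add_le _ _
      _ ≤ c * b + specNorm (S * D) * u_max := by
          gcongr
          · exact (hA _).trans (by gcongr)
          · exact (eunorm_mulVec_le _ _).trans (by gcongr; exacts [specNorm_nonneg _, hu ℓ])
      _ ≤ b := hb

end ClosedLoop

theorem stmt_16_general {n nb m mb p : ℕ}
    (A_L : Matrix (Fin n) (Fin n) ℝ) (B_L : Matrix (Fin n) (Fin m) ℝ)
    (C : Matrix (Fin p) (Fin n) ℝ)
    (Ab_L : Matrix (Fin nb) (Fin nb) ℝ) (Bb_L : Matrix (Fin nb) (Fin mb) ℝ)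
    (Cb : Matrix (Fin p) (Fin nb) ℝ)
    (M : Matrix (Fin n) (Fin n) ℝ) (hM : M.PosDef)
    (K : Matrix (Fin m) (Fin n) ℝ) (l : ℝ) (hl0 : 0 < l) (hl : l < 1 / 2)
    (hcontr : ((-(2 * l)) • M -
      ((A_L + B_L * K)ᵀ * M * (A_L + B_L * K) - M)).PosSemidef)
    (hMC : (M - Cᵀ * C).PosSemidef)
    (P : Matrix (Fin n) (Fin nb) ℝ) (Q : Matrix (Fin m) (Fin nb) ℝ)
    (hCP : C * P = Cb) (hPA : P * Ab_L = A_L * P + B_L * Q)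
    (R : Matrix (Fin m) (Fin mb) ℝ)
    (γ : ℝ)
    (hγ : γ = Real.sqrt (1 - l) / l * specNorm ((hM.posSemidef.1.eigenvectorUnitary.1 *
      diagonal ((↑) ∘ Real.sqrt ∘ hM.posSemidef.1.eigenvalues) *
      (star hM.posSemidef.1.eigenvectorUnitary : Matrix (Fin n) (Fin n) ℝ)) *
      (B_L * R - P * Bb_L)))
    (ub_max : ℝ)
    (xb : ℕ → Fin nb → ℝ) (x : ℕ → Fin n → ℝ) (ub : ℕ → Fin mb → ℝ)
    (hub : ∀ ℓ, eunorm (ub ℓ) ≤ ub_max)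
    (hdyn' : ∀ ℓ, xb (ℓ + 1) = Ab_L.mulVec (xb ℓ) + Bb_L.mulVec (ub ℓ))
    (hdyn : ∀ ℓ, x (ℓ + 1) = A_L.mulVec (x ℓ) +
      B_L.mulVec (R.mulVec (ub ℓ) + Q.mulVec (xb ℓ) +
        K.mulVec (x ℓ - P.mulVec (xb ℓ))))
    (hinit : x 0 = P.mulVec (xb 0)) :
    ∀ ℓ : ℕ, eunorm (Cb.mulVec (xb ℓ) - C.mulVec (x ℓ)) ≤ γ * ub_max := by
  change γ = _ / _ * specNorm (hM.posSemidef.1.spectralSqrt * _) at hγ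
  set S := hM.posSemidef.1.spectralSqrt
  set δ := specNorm (S * (B_L * R - P * Bb_L))
  have hS : Sᵀ * S = M := by
    rw [← conjTranspose_eq_transpose_of_trivial, hM.posSemidef.1.isHermitian_spectralSqrt.eq,
      hM.posSemidef.spectralSqrt_mul_self]
  have hδ : 0 ≤ δ * ub_max := mul_nonneg (specNorm_nonneg _) ((eunorm_nonneg _).trans (hub 0))
  have hγub : γ * ub_max = √(1 - l) / l * (δ * ub_max) := by rw [hγ, mul_assoc]
  have hbound : ∀ ℓ, eunorm (S *ᵥ (x ℓ - P *ᵥ xb ℓ)) ≤ γ * ub_max := by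
    refine eunorm_mulVec_le_of_contracting (Real.sqrt_nonneg _)
      (eunorm_mulVec_mulVec_le_of_lyapunov hS hl.le hcontr) hub
      (fun ℓ => tracking_error_succ hPA (hdyn' ℓ) (hdyn ℓ)) ?_ ?_
    · rw [hinit, sub_self, mulVec_zero, eunorm_zero, hγub]
      exact mul_nonneg (div_nonneg (Real.sqrt_nonneg _) hl0.le) hδ
    · rw [hγub]
      exact sqrt_one_sub_two_mul_mul_div_mul_add_le hl0 hl.le hδ
  intro ℓ
  have hout := eunorm_mulVec_le_mul_of_posSemidef zero_le_one (A := C) (B := S)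
    (by rwa [one_pow, one_smul, hS]) (x ℓ - P *ᵥ xb ℓ)
  rw [← hCP, ← mulVec_mulVec, ← eunorm_neg, neg_sub, ← mulVec_sub]
  exact (hout.trans_eq (one_mul _)).trans (hbound ℓ)

/-- if `x₀ = Px̄₀` (i.e. `V(x̄₀,x₀) = 0`), the closed-loop output
tracking error is bounded by `γ·ū_max` at every step. -/
theorem stmt_16 {n nb m mb p : ℕ}
    (A_L : Matrix (Fin n) (Fin n) ℝ) (B_L : Matrix (Fin n) (Fin m) ℝ)
    (C : Matrix (Fin p) (Fin n) ℝ)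
    (Ab_L : Matrix (Fin nb) (Fin nb) ℝ) (Bb_L : Matrix (Fin nb) (Fin mb) ℝ)
    (Cb : Matrix (Fin p) (Fin nb) ℝ)
    (M : Matrix (Fin n) (Fin n) ℝ) (hM : M.PosDef)
    (K : Matrix (Fin m) (Fin n) ℝ) (l : ℝ) (hl0 : 0 < l) (hl : l < 1 / 2)
    (hcontr : ((-(2 * l)) • M -
      ((A_L + B_L * K)ᵀ * M * (A_L + B_L * K) - M)).PosSemidef)
    (hMC : (M - Cᵀ * C).PosSemidef)
    (P : Matrix (Fin n) (Fin nb) ℝ) (Q : Matrix (Fin m) (Fin nb) ℝ)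
    (hCP : C * P = Cb) (hPA : P * Ab_L = A_L * P + B_L * Q)
    (R : Matrix (Fin m) (Fin mb) ℝ)
    (γ : ℝ)
    (hγ : γ = Real.sqrt (1 - l) / l * specNorm ((hM.posSemidef.1.eigenvectorUnitary.1 *
      diagonal ((↑) ∘ Real.sqrt ∘ hM.posSemidef.1.eigenvalues) *
      (star hM.posSemidef.1.eigenvectorUnitary : Matrix (Fin n) (Fin n) ℝ)) *
      (B_L * R - P * Bb_L)))
    (ub_max : ℝ) (hub_max : 0 < ub_max)
    (xb : ℕ → Fin nb → ℝ) (x : ℕ → Fin n → ℝ) (ub : ℕ → Fin mb → ℝ)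
    (hub : ∀ ℓ, eunorm (ub ℓ) ≤ ub_max)
    (hdyn' : ∀ ℓ, xb (ℓ + 1) = Ab_L.mulVec (xb ℓ) + Bb_L.mulVec (ub ℓ))
    (hdyn : ∀ ℓ, x (ℓ + 1) = A_L.mulVec (x ℓ) +
      B_L.mulVec (R.mulVec (ub ℓ) + Q.mulVec (xb ℓ) +
        K.mulVec (x ℓ - P.mulVec (xb ℓ))))
    (hinit : x 0 = P.mulVec (xb 0)) :
    ∀ ℓ : ℕ, eunorm (Cb.mulVec (xb ℓ) - C.mulVec (x ℓ)) ≤ γ * ub_max :=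
  stmt_16_general A_L B_L C Ab_L Bb_L Cb M hM K l hl0 hl hcontr hMC P Q hCP hPA R γ hγ ub_max xb x
    ub hub hdyn' hdyn hinit
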